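/- For |q|<1, E₈(q) = E₄(q)². -/

import Mathlib

open Complex

/-- Eisenstein series `E_k(q) = 1 - (2k/B_k) ∑_{r≥1} r^{k-1} q^r/(1-q^r)` (for even `k ≥ 4`),
with `B_k` the Bernoulli numbers defined by `t/(e^t-1) = ∑ B_n t^n/n!`. -/
noncomputable def Eis (k : ℕ) (q : ℂ) : ℂ :=
  1 - (2 * (k : ℂ) / ((bernoulli k : ℚ) : ℂ)) *
    ∑' r : ℕ, ((r : ℂ) + 1) ^ (k - 1) * q ^ (r + 1) / (1 - q ^ (r + 1))

/-- The modular discriminant `Δ(q) = q ∏_{r≥1} (1-q^r)^24`. -/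
noncomputable def Δ (q : ℂ) : ℂ := q * ∏' r : ℕ, (1 - q ^ (r + 1)) ^ 24

/-!
`E₈ - E₄²` is a level-one modular form of weight `8` whose `q`-expansion has constant term
`1 - 1² = 0`; as there are no nonzero cusp forms of weight below `12`, it vanishes. By the
Lambert series identity `∑ nᵏ⁻¹ qⁿ / (1 - qⁿ) = ∑ σₖ₋₁(n) qⁿ`, `Eis k q` is the value of the
normalised Eisenstein series `E k` at any `z` with `q = exp (2πiz)`, and every `q ≠ 0` of the
open unit disc is of this form.
-/

open UpperHalfPlane hiding I
open ModularForm ModularFormClass EisensteinSeries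
open scoped Real ArithmeticFunction.sigma MatrixGroups

lemma Eis_eq_one_sub_tsum_sigma (k : ℕ) {q : ℂ} (hq : ‖q‖ < 1) :
    Eis k q = 1 - (2 * k / bernoulli k) * ∑' n : ℕ+, σ (k - 1) n * q ^ (n : ℕ) := by
  rw [Eis, ← tsum_pow_div_one_sub_eq_tsum_sigma hq,
    tsum_pnat_eq_tsum_succ (f := fun n : ℕ => (n : ℂ) ^ (k - 1) * q ^ n / (1 - q ^ n))]
  push_cast
  rfl

lemma Eis_cexp_eq_E {k : ℕ} (hk : 3 ≤ k) (hk2 : Even k) (z : ℍ) :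
    Eis k (cexp (2 * π * I * z)) = E hk z := by
  simp_rw [q_expansion_bernoulli hk hk2 z, zpow_natCast,
    Eis_eq_one_sub_tsum_sigma k (norm_exp_two_pi_I_lt_one z)]

lemma exists_cexp_two_pi_I_mul_eq {q : ℂ} (hq : ‖q‖ < 1) (hq0 : q ≠ 0) :
    ∃ z : ℍ, cexp (2 * π * I * z) = q :=
  ⟨⟨_, Function.Periodic.im_invQParam_pos_of_norm_lt_one one_pos hq hq0⟩, by
    simpa [Function.Periodic.qParam] using Function.Periodic.qParam_right_inv one_ne_zero hq0⟩

lemma ModularForm.eq_of_coeff_zero_eq_of_lt_twelve {k : ℤ} (hk : k < 12)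
    {f g : ModularForm 𝒮ℒ k} (h : (qExpansion 1 f).coeff 0 = (qExpansion 1 g).coeff 0) :
    f = g := by
  have h0 : (qExpansion 1 (f - g)).coeff 0 = 0 := by
    rw [ModularForm.qExpansion_sub one_pos one_mem_strictPeriods_SL, map_sub, h,
      sub_self]
  refine sub_eq_zero.mp (sturm_bound_levelOne ?_)
  rw [show k.toNat / 12 = 0 by omega]
  simpa [PowerSeries.order_ne_zero_iff_constCoeff_eq_zero, pos_iff_ne_zero] using h0

lemma E_eight_eq_E₄_sq : E (show 3 ≤ 8 by norm_num) = mcast (by norm_num) (E₄.pow 2) := by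
  refine eq_of_coeff_zero_eq_of_lt_twelve (by norm_num) ?_
  simp only [coe_mcast, ModularForm.qExpansion_pow one_pos one_mem_strictPeriods_SL]
  simp [pow_two, PowerSeries.coeff_mul, -PowerSeries.coeff_zero_eq_constantCoeff,
    E_qExpansion_coeff_zero _ ⟨4, rfl⟩, E_qExpansion_coeff_zero _ ⟨2, rfl⟩]

theorem E8_eq (q : ℂ) (hq : ‖q‖ < 1) :
    Eis 8 q = (Eis 4 q) ^ 2 := by
  rcases eq_or_ne q 0 with rfl | hq0
  · simp [Eis]
  obtain ⟨z, rfl⟩ := exists_cexp_two_pi_I_mul_eq hq hq0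
  rw [Eis_cexp_eq_E (by norm_num) (by decide), Eis_cexp_eq_E (by norm_num) (by decide),
    E_eight_eq_E₄_sq, coe_mcast, coe_pow, Pi.pow_apply]
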